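/- arXiv:2109.07649 — 5 statements merged into one kernel-verified Lean document; each statement's English description precedes it below -/
import Mathlib

section
/- Let $N > 1$ be a squarefree positive integer. Then for every positive integer $n$, $-\frac{1}{\varphi(N)} \sum_{M \mid N, M \neq 1} \mu(N/M)\, a_n^{(M)} = \frac{\mu(N)}{\varphi(N)} \sigma(n')$, where $a_n^{(M)} = \sigma(n)$ if $M \nmid n$ and $a_n^{(M)} = \sigma(n) - M\sigma(n/M)$ if $M \mid n$, and $n' = \prod_{p \nmid N} p^{v_p(n)}$ is the part of $n$ coprime to $N$. -/
/-!
The `M = 1` term vanishes, `∑_{M ∣ N} μ(N/M) = 0` for `N > 1`, and `μ(N/M) = μ(N) μ(M)` for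
squarefree `N`, so the claim reduces to `∑_{M ∣ (N, n)} μ(M) M σ(n/M) = σ(n')`. With
`g = μ · 1_{· ∣ N}` and `σ = ζ * id`, the left side is `((g · id) * id * ζ)(n)`, and
`(g · id) * id = (g * ζ) · id` is `m ↦ m · [gcd(m, N) = 1]`. Hence it is the sum of the divisors of
`n` coprime to `N`, which are exactly the divisors of `n'`.
-/

open ArithmeticFunction Finset
open scoped ArithmeticFunction.sigma ArithmeticFunction.Moebius ArithmeticFunction.zeta

namespace Nat

def coprimePart (n N : ℕ) : ℕ :=
  ∏ p ∈ n.primeFactors, if p ∣ N then 1 else p ^ n.factorization p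

theorem coprimePart_mul_prod_dvd (n N : ℕ) (hn : n ≠ 0) :
    n.coprimePart N * ∏ p ∈ n.primeFactors with p ∣ N, p ^ n.factorization p = n := by
  rw [coprimePart, prod_ite, prod_const_one, one_mul, mul_comm, prod_filter_mul_prod_filter_not]
  exact prod_factorization_pow_eq_self hn

theorem coprime_coprimePart (n N : ℕ) : (n.coprimePart N).Coprime N := by
  refine Coprime.prod_left fun p hp => ?_
  split_ifs with hpN
  · exact coprime_one_left N
  · exact (((prime_of_mem_primeFactors hp).coprime_iff_not_dvd).2 hpN).pow_left _

theorem dvd_coprimePart_iff {n N m : ℕ} (hn : n ≠ 0) :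
    m ∣ n.coprimePart N ↔ m ∣ n ∧ m.Coprime N := by
  refine ⟨fun h => ⟨h.trans ?_, (coprime_coprimePart n N).coprime_dvd_left h⟩,
    fun ⟨hmn, hmN⟩ => ?_⟩
  · exact Dvd.intro _ (coprimePart_mul_prod_dvd n N hn)
  · rw [← coprimePart_mul_prod_dvd n N hn] at hmn
    refine Coprime.dvd_of_dvd_mul_right ?_ hmn
    exact Coprime.prod_right fun p hp => (hmN.coprime_dvd_right (mem_filter.1 hp).2).pow_right _

theorem divisors_coprimePart {n N : ℕ} (hn : n ≠ 0) :
    (n.coprimePart N).divisors = {m ∈ n.divisors | m.Coprime N} := by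
  have h0 : n.coprimePart N ≠ 0 := left_ne_zero_of_mul (coprimePart_mul_prod_dvd n N hn ▸ hn)
  ext m
  simp [dvd_coprimePart_iff hn, h0, hn]

theorem sum_divisors_ite_dvd_comm {M : Type*} [AddCommMonoid M] {N n : ℕ} (hN : N ≠ 0)
    (hn : n ≠ 0) (f : ℕ → M) :
    ∑ d ∈ N.divisors, (if d ∣ n then f d else 0) = ∑ d ∈ n.divisors, if d ∣ N then f d else 0 := by
  rw [← sum_filter, ← sum_filter]
  congr 1
  ext d
  simp [hN, hn, and_comm]

end Nat

namespace ArithmeticFunction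

theorem sum_divisors_moebius (m : ℕ) : ∑ d ∈ m.divisors, (μ d : ℤ) = if m = 1 then 1 else 0 := by
  rw [← coe_mul_zeta_apply, moebius_mul_coe_zeta, one_apply]

theorem moebius_div_of_squarefree {N M : ℕ} (hN : Squarefree N) (hM : M ∣ N) :
    μ (N / M) = μ N * μ M := by
  obtain ⟨k, rfl⟩ := hM
  have hM0 : M ≠ 0 := left_ne_zero_of_mul hN.ne_zero
  obtain ⟨hcop, hM, -⟩ := Nat.squarefree_mul_iff.mp hN
  rw [Nat.mul_div_cancel_left k (Nat.pos_of_ne_zero hM0),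
    isMultiplicative_moebius.map_mul_of_coprime hcop]
  linear_combination -(μ k) * moebius_sq_eq_one_of_squarefree hM

theorem natCoe_sigma_one {R : Type*} [Semiring R] :
    ((σ 1 : ArithmeticFunction ℕ) : ArithmeticFunction R) = ζ * (.id : ArithmeticFunction ℕ) := by
  rw [← zeta_mul_pow_eq_sigma, pow_one_eq_id, natCoe_mul]

theorem pmul_id_mul_id {R : Type*} [CommSemiring R] (f : ArithmeticFunction R) :
    f.pmul (.id : ArithmeticFunction ℕ) * (.id : ArithmeticFunction ℕ) =
      (f * ζ).pmul (.id : ArithmeticFunction ℕ) := by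
  ext m
  simp only [mul_apply, pmul_apply, natCoe_apply, id_apply, sum_mul]
  refine sum_congr rfl fun x hx => ?_
  obtain ⟨hx, hm⟩ := Nat.mem_divisorsAntidiagonal.mp hx
  rw [zeta_apply_ne (right_ne_zero_of_mul (hx ▸ hm)), ← hx, Nat.cast_mul]
  ring

def moebiusDvd (N : ℕ) : ArithmeticFunction ℤ :=
  ⟨fun d => if d ∣ N then μ d else 0, by simp⟩

theorem moebiusDvd_apply (N d : ℕ) : moebiusDvd N d = if d ∣ N then μ d else 0 := rfl

theorem moebiusDvd_mul_zeta_apply (N : ℕ) {m : ℕ} (hm : m ≠ 0) :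
    (moebiusDvd N * ζ) m = if m.Coprime N then 1 else 0 := by
  have hgcd : {d ∈ m.divisors | d ∣ N} = (m.gcd N).divisors := by
    ext d
    simp [Nat.dvd_gcd_iff, hm, Nat.gcd_ne_zero_left hm]
  rw [coe_mul_zeta_apply]
  simp_rw [moebiusDvd_apply]
  rw [← sum_filter, hgcd, sum_divisors_moebius]

theorem moebiusDvd_pmul_id_mul_sigma_one_apply (N n : ℕ) :
    ((moebiusDvd N).pmul (.id : ArithmeticFunction ℕ) * (σ 1 : ArithmeticFunction ℕ)) n =
      ∑ m ∈ n.divisors with m.Coprime N, (m : ℤ) := by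
  rw [natCoe_sigma_one, mul_left_comm, mul_comm, pmul_id_mul_id, coe_mul_zeta_apply, sum_filter]
  refine sum_congr rfl fun m hm => ?_
  rw [pmul_apply, moebiusDvd_mul_zeta_apply N (Nat.ne_of_gt (Nat.pos_of_mem_divisors hm))]
  simp

theorem sum_divisors_moebius_mul_sigma_one_div {N n : ℕ} (hN : N ≠ 0) (hn : n ≠ 0) :
    ∑ M ∈ N.divisors, (if M ∣ n then μ M * M * (σ 1 (n / M) : ℤ) else 0) =
      σ 1 (n.coprimePart N) := by
  have hconv : ((moebiusDvd N).pmul (.id : ArithmeticFunction ℕ) *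
      (σ 1 : ArithmeticFunction ℕ)) n =
        ∑ M ∈ n.divisors, (if M ∣ N then μ M * M * (σ 1 (n / M) : ℤ) else 0) := by
    simp only [mul_apply, pmul_apply, natCoe_apply, id_apply, moebiusDvd_apply, ite_mul, zero_mul]
    exact Nat.sum_divisorsAntidiagonal fun a b => if a ∣ N then μ a * a * (σ 1 b : ℤ) else 0
  rw [Nat.sum_divisors_ite_dvd_comm hN hn, ← hconv, moebiusDvd_pmul_id_mul_sigma_one_apply,
    ← Nat.divisors_coprimePart hn, sigma_one_apply]
  push_cast
  rfl

end ArithmeticFunction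

/-- The coefficient `a_n^{(M)}` of `Ẽ_{2,M}`. -/
def eisensteinTildeCoeff (M n : ℕ) : ℤ :=
  if M ∣ n then σ 1 n - M * σ 1 (n / M) else σ 1 n

theorem eisensteinTildeCoeff_one (n : ℕ) : eisensteinTildeCoeff 1 n = 0 := by
  simp [eisensteinTildeCoeff]

theorem sum_moebius_div_mul_eisensteinTildeCoeff {N n : ℕ} (hN : Squarefree N) (hN1 : N ≠ 1)
    (hn : n ≠ 0) :
    ∑ M ∈ N.divisors, μ (N / M) * eisensteinTildeCoeff M n = -(μ N * σ 1 (n.coprimePart N)) := by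
  calc ∑ M ∈ N.divisors, μ (N / M) * eisensteinTildeCoeff M n
      = (∑ M ∈ N.divisors, (μ (N / M) : ℤ)) * σ 1 n -
          μ N * ∑ M ∈ N.divisors, (if M ∣ n then μ M * M * (σ 1 (n / M) : ℤ) else 0) := by
        rw [sum_mul, mul_sum, ← sum_sub_distrib]
        refine sum_congr rfl fun M hM => ?_
        rw [moebius_div_of_squarefree hN (Nat.dvd_of_mem_divisors hM), eisensteinTildeCoeff]
        split_ifs <;> ring
    _ = -(μ N * σ 1 (n.coprimePart N)) := by
        rw [Nat.sum_div_divisors, sum_divisors_moebius, if_neg hN1,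
          sum_divisors_moebius_mul_sigma_one_div hN.ne_zero hn]
        ring

/-- The Fourier coefficients of the classical weight-2 level-`N` Eisenstein series:
`E_{2,N} = -(1/φ(N)) ∑_{M∣N, M≠1} μ(N/M) Ẽ_{2,M}` at the level of `n`-th Fourier
coefficients, where the `n`-th coefficient of `Ẽ_{2,M}` is `σ(n) - M σ(n/M)` if `M ∣ n`
and `σ(n)` otherwise, and the `n`-th coefficient of `E_{2,N}` is `μ(N)/φ(N) ⋅ σ(n')`
with `n'` the part of `n` coprime to `N`. -/
theorem stmt2 (N : ℕ) (hN : Squarefree N) (hN1 : 1 < N) (n : ℕ) (hn : 0 < n) :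
    -(1 / (N.totient : ℚ)) *
        ∑ M ∈ N.divisors.erase 1,
          ((ArithmeticFunction.moebius (N / M) : ℤ) : ℚ) *
            (if M ∣ n then (∑ d ∈ n.divisors, (d : ℚ)) - M * ∑ d ∈ (n / M).divisors, (d : ℚ)
             else ∑ d ∈ n.divisors, (d : ℚ)) =
      ((ArithmeticFunction.moebius N : ℤ) : ℚ) / (N.totient : ℚ) *
        ∑ d ∈ (∏ p ∈ n.primeFactors, if p ∣ N then 1 else p ^ n.factorization p).divisors,
          (d : ℚ) := by
  have hσ (m : ℕ) : ∑ d ∈ m.divisors, (d : ℚ) = σ 1 m := by simp [sigma_one_apply]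
  have key := sum_moebius_div_mul_eisensteinTildeCoeff hN hN1.ne' hn.ne'
  rw [← sum_erase _ (a := 1) (by rw [eisensteinTildeCoeff_one, mul_zero])] at key
  have hq := congrArg (Int.cast : ℤ → ℚ) key
  push_cast [eisensteinTildeCoeff] at hq
  simp only [hσ]
  rw [hq, Nat.coprimePart]
  ring
end

section
/- For a nonzero integer $\alpha$ and a complex number $s$ with $\mathrm{Re}(s) > 0$, the Euler product $\prod_p \frac{|\alpha|_p^{2s} - p^{2s}}{1 - p^{2s}} \cdot (1 - p^{-2s-1})$ over all primes $p$ converges and equals $\frac{\sigma_{2s}(|\alpha|)}{\zeta(2s+1)\,|\alpha|^{2s}}$, where $\sigma_t(n) = \sum_{d \mid n} d^t$. -/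
open Complex

/-!
Write `x_p = p ^ (2s)` and `v_p = v_p(α)`. Since `|x_p| > 1`, the first factor at `p` is the
geometric sum `x_p ^ (-v_p) (1 + x_p + ⋯ + x_p ^ v_p)`, which is `1` for `p ∤ α`; so the
product of these factors is finite, and by multiplicativity of `d ↦ d ^ (2s)` it equals
`|α| ^ (-2s) σ_{2s}(|α|)`. The second factors form the Euler product of `1 / ζ(2s + 1)`,
which converges absolutely because `Re (2s + 1) > 1`.
-/

@[simps]
noncomputable def natCpowHom (t : ℂ) : ℕ →* ℂ where
  toFun d := (d : ℂ) ^ t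
  map_one' := by simp
  map_mul' m n := by rw [Nat.cast_mul, natCast_mul_natCast_cpow]

lemma one_lt_norm_natCast_cpow {n : ℕ} (hn : 1 < n) {t : ℂ} (ht : 0 < t.re) :
    1 < ‖(n : ℂ) ^ t‖ := by
  rw [norm_natCast_cpow_of_pos (by omega)]
  exact Real.one_lt_rpow (by exact_mod_cast hn) ht

lemma cpow_neg_mul_natCast (x t : ℂ) (v : ℕ) : x ^ (-t * v) = (x ^ t)⁻¹ ^ v := by
  rw [mul_comm, cpow_nat_mul, cpow_neg]

lemma inv_pow_sub_div_one_sub {K : Type*} [Field K] {x : K} (hx : x ≠ 1) (v : ℕ) :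
    (x⁻¹ ^ v - x) / (1 - x) = x⁻¹ ^ v * ∑ k ∈ Finset.range (v + 1), x ^ k := by
  rcases eq_or_ne x 0 with rfl | hx₀
  · cases v <;> simp
  rw [geom_sum_eq hx, inv_pow, pow_succ]
  have : 1 - x ≠ 0 := sub_ne_zero.mpr hx.symm
  have : x - 1 ≠ 0 := sub_ne_zero.mpr hx
  field_simp
  ring

lemma riemannZeta_inv_eulerProduct_hasProd {s : ℂ} (hs : 1 < s.re) :
    HasProd (fun p : Nat.Primes ↦ 1 - (p : ℂ) ^ (-s)) (riemannZeta s)⁻¹ := by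
  simpa only [inv_inv] using
    (riemannZeta_eulerProduct_hasProd hs).inv₀ (riemannZeta_ne_zero_of_one_lt_re hs)

section

open ArithmeticFunction
open scoped ArithmeticFunction.zeta

variable {R : Type*}

lemma isMultiplicative_toArithmeticFunction [CommMonoidWithZero R] (f : ℕ →* R) :
    (toArithmeticFunction f).IsMultiplicative := by
  refine IsMultiplicative.iff_ne_zero.mpr ⟨by simp [toArithmeticFunction], fun hm hn _ ↦ ?_⟩
  simp [toArithmeticFunction, hm, hn]

lemma sum_divisors_monoidHom [CommSemiring R] (f : ℕ →* R) {n : ℕ} (hn : n ≠ 0) :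
    ∑ d ∈ n.divisors, f d =
      ∏ p ∈ n.primeFactors, ∑ k ∈ Finset.range (n.factorization p + 1), f p ^ k := by
  set F := toArithmeticFunction f
  have hF : ∀ {d : ℕ}, d ≠ 0 → F d = f d := fun hd ↦ if_neg hd
  have hmul : ((ζ : ArithmeticFunction R) * F).IsMultiplicative :=
    isMultiplicative_zeta.natCast.mul (isMultiplicative_toArithmeticFunction f)
  calc ∑ d ∈ n.divisors, f d = ((ζ : ArithmeticFunction R) * F) n := by
        rw [coe_zeta_mul_apply]
        exact Finset.sum_congr rfl fun d hd ↦ (hF (Nat.pos_of_mem_divisors hd).ne').symm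
    _ = ∏ p ∈ n.primeFactors, ((ζ : ArithmeticFunction R) * F) (p ^ n.factorization p) := by
        rw [hmul.multiplicative_factorization _ hn, Finsupp.prod, Nat.support_factorization]
    _ = _ := Finset.prod_congr rfl fun p hp ↦ by
        have hp := Nat.prime_of_mem_primeFactors hp
        rw [coe_zeta_mul_apply, Nat.sum_divisors_prime_pow hp]
        exact Finset.sum_congr rfl fun k _ ↦ by rw [hF (pow_ne_zero _ hp.ne_zero), map_pow]

lemma prod_pow_factorization_monoidHom [CommMonoid R] (f : ℕ →* R) {n : ℕ} (hn : n ≠ 0) :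
    ∏ p ∈ n.primeFactors, f p ^ n.factorization p = f n := by
  conv_rhs => rw [← Nat.prod_factorization_pow_eq_self hn]
  simp only [Finsupp.prod, map_prod, map_pow, Nat.support_factorization]

end

lemma hasProd_inv_pow_factorization_mul_geom_sum {K : Type*} [Field K] [TopologicalSpace K]
    (f : ℕ →* K) {n : ℕ} (hn : n ≠ 0) :
    HasProd (fun p : Nat.Primes ↦
        (f p)⁻¹ ^ n.factorization p * ∑ k ∈ Finset.range (n.factorization p + 1), f p ^ k)
      ((∑ d ∈ n.divisors, f d) / f n) := by
  set g : ℕ → K := fun p ↦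
    (f p)⁻¹ ^ n.factorization p * ∑ k ∈ Finset.range (n.factorization p + 1), f p ^ k
  have hprod : ∏ p ∈ n.primeFactors.subtype Nat.Prime, g p = (∑ d ∈ n.divisors, f d) / f n := by
    rw [Finset.prod_subtype_of_mem g fun _ ↦ Nat.prime_of_mem_primeFactors,
      Finset.prod_mul_distrib, sum_divisors_monoidHom f hn, ← prod_pow_factorization_monoidHom f hn,
      div_eq_inv_mul, ← Finset.prod_inv_distrib]
    simp only [inv_pow]
  rw [← hprod]
  refine hasProd_prod_of_ne_finset_one fun p hp ↦ ?_
  have : n.factorization p = 0 :=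
    Finsupp.notMem_support_iff.mp fun h ↦ hp (Finset.mem_subtype.mpr (by simpa using h))
  simp [this]

/-- For a nonzero integer `α` and `Re(s) > 0`, the Euler product
`∏_p ((|α|_p^{2s} - p^{2s})/(1 - p^{2s})) (1 - p^{-2s-1})` over all primes converges to
`σ_{2s}(|α|) / (ζ(2s+1) |α|^{2s})`. -/
theorem stmt4 (α : ℤ) (hα : α ≠ 0) (s : ℂ) (hs : 0 < s.re) :
    HasProd
      (fun p : Nat.Primes =>
        ((((p : ℕ) : ℂ) ^ (-(2 * s) * (padicValInt (p : ℕ) α : ℂ)) - ((p : ℕ) : ℂ) ^ (2 * s)) /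
            (1 - ((p : ℕ) : ℂ) ^ (2 * s))) *
          (1 - ((p : ℕ) : ℂ) ^ (-(2 * s) - 1)))
      ((∑ d ∈ α.natAbs.divisors, (d : ℂ) ^ (2 * s)) /
        (riemannZeta (2 * s + 1) * ((α.natAbs : ℕ) : ℂ) ^ (2 * s))) := by
  have hn : α.natAbs ≠ 0 := Int.natAbs_ne_zero.mpr hα
  have h2s : 0 < (2 * s).re := by simpa using hs
  have hre : 1 < (2 * s + 1).re := by rw [add_re, one_re]; linarith
  convert (hasProd_inv_pow_factorization_mul_geom_sum (natCpowHom (2 * s)) hn).mul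
    (riemannZeta_inv_eulerProduct_hasProd hre) using 1
  · funext p
    have hv : padicValInt p α = α.natAbs.factorization p := (Nat.factorization_def _ p.2).symm
    have hx : ((p : ℕ) : ℂ) ^ (2 * s) ≠ 1 := fun h ↦
      (one_lt_norm_natCast_cpow p.2.one_lt h2s).ne' (by rw [h, norm_one])
    rw [natCpowHom_apply, neg_add', ← inv_pow_sub_div_one_sub hx, ← cpow_neg_mul_natCast, hv]
  · simp only [natCpowHom_apply]
    ring
end

section
/- For an even integer $k \geq 2$, real $x$, real $y > 0$ and a negative real number $\alpha$, the archimedean Whittaker integral $\int_{\mathbb{R}} f\big(\begin{pmatrix}0&-1\\1&0\end{pmatrix}\begin{pmatrix}1&b\\0&1\end{pmatrix}\begin{pmatrix}1&x\\0&1\end{pmatrix}\begin{pmatrix}y&0\\0&1\end{pmatrix}\big) e^{2\pi i\alpha b}\,db$ with $f = f_{(k-1)/2}^{(k)}$ equals $\frac{(2\pi i)^k}{(k-1)!}\, y^{k/2}\, |\alpha|^{k-1}\, e^{-2\pi i \alpha(x+iy)}$, and it equals $0$ if instead $\alpha > 0$. -/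
/-!
By the Iwasawa decomposition, `f (w n(b) n(x) a(y)) = y^{k/2} (x + b + i y)^{-k}`, so after the
shift `b ↦ b - x` the integral is `y^{k/2} e^{-2πiαx}` times the inverse Fourier transform at `α`
of `u ↦ (u + i y)^{-k}`. That function is the Fourier transform of the explicit kernel
`t ↦ (-2πi)^k/(k-1)! (-t)^{k-1} e^{2πty}` on `t ≤ 0`, by the Gamma integral
`∫₀^∞ t^{k-1} e^{-st} dt = (k-1)!/s^k` for `Re s > 0`; since both are integrable for `k ≥ 2`,
Fourier inversion recovers the kernel at `α`, which vanishes for `α > 0`.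
-/

open Complex Matrix MeasureTheory

/-- The rotation matrix `r(θ)`. -/
noncomputable def rotMat (θ : ℝ) : Matrix (Fin 2) (Fin 2) ℝ :=
  !![Real.cos θ, Real.sin θ; -Real.sin θ, Real.cos θ]

open Set Filter Topology

lemma integrableOn_pow_mul_cexp_neg_mul_Ioi (n : ℕ) {s : ℂ} (hs : 0 < s.re) :
    IntegrableOn (fun t : ℝ => (t : ℂ) ^ n * cexp (-(s * t))) (Ioi 0) := by
  have hreal : IntegrableOn (fun t : ℝ => t ^ (n : ℝ) * Real.exp (-s.re * t ^ (1 : ℝ))) (Ioi 0) :=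
    integrableOn_rpow_mul_exp_neg_mul_rpow (by linarith [n.cast_nonneg (α := ℝ)]) one_pos hs
  refine hreal.mono' (by fun_prop) ?_
  filter_upwards [ae_restrict_mem measurableSet_Ioi] with t ht
  rw [norm_mul, norm_pow, norm_real, norm_exp, Real.norm_of_nonneg (le_of_lt ht),
    Real.rpow_natCast, Real.rpow_one]
  simp

lemma tendsto_pow_mul_cexp_neg_mul_atTop (n : ℕ) {s : ℂ} (hs : 0 < s.re) :
    Tendsto (fun t : ℝ => (t : ℂ) ^ n * cexp (-(s * t))) atTop (𝓝 0) := by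
  rw [tendsto_zero_iff_norm_tendsto_zero]
  refine (tendsto_rpow_mul_exp_neg_mul_atTop_nhds_zero n s.re hs).congr' ?_
  filter_upwards [eventually_ge_atTop 0] with t ht
  rw [norm_mul, norm_pow, norm_real, norm_exp, Real.norm_of_nonneg ht, Real.rpow_natCast]
  simp

lemma integral_pow_mul_cexp_neg_mul_Ioi (n : ℕ) {s : ℂ} (hs : 0 < s.re) :
    ∫ t in Ioi (0 : ℝ), (t : ℂ) ^ n * cexp (-(s * t)) = n.factorial / s ^ (n + 1) := by
  have hs0 : s ≠ 0 := by rintro rfl; simp at hs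
  induction n with
  | zero =>
    simpa [neg_mul, neg_div_neg_eq] using integral_exp_mul_complex_Ioi (a := -s) (by simpa) 0
  | succ n ih =>
    have hv : ∀ t : ℝ, HasDerivAt (fun t : ℝ => -cexp (-(s * t)) / s) (cexp (-(s * t))) t := by
      intro t
      have := ((((hasDerivAt_id (t : ℂ)).const_mul (-s)).cexp).div_const (-s)).comp_ofReal
      convert this using 1
      · ext t; simp [div_neg, neg_div]
      · field_simp; simp
    have hu : ∀ t : ℝ, HasDerivAt (fun t : ℝ => (t : ℂ) ^ (n + 1))
        ((n + 1 : ℂ) * (t : ℂ) ^ n) t := by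
      intro t
      simpa using (hasDerivAt_pow (n + 1) (t : ℂ)).comp_ofReal
    have hcont : Continuous fun t : ℝ => (t : ℂ) ^ (n + 1) * (-cexp (-(s * t)) / s) := by
      fun_prop
    have hibp := integral_Ioi_mul_deriv_eq_deriv_mul (a := 0) (a' := 0) (b' := 0)
      (fun t _ => hu t) (fun t _ => hv t) (integrableOn_pow_mul_cexp_neg_mul_Ioi (n + 1) hs)
      (IntegrableOn.congr_fun ((integrableOn_pow_mul_cexp_neg_mul_Ioi n hs).const_mul (-(n + 1) / s))
        (fun t _ => by simp only [Pi.mul_apply]; ring) measurableSet_Ioi)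
      (by simpa [Pi.mul_def] using (hcont.tendsto 0).mono_left nhdsWithin_le_nhds)
      (by
        simpa [Pi.mul_def, mul_neg, neg_div, mul_div_assoc] using
          ((tendsto_pow_mul_cexp_neg_mul_atTop (n + 1) hs).neg.div_const s))
    calc ∫ t in Ioi (0 : ℝ), (t : ℂ) ^ (n + 1) * cexp (-(s * t))
        = (n + 1) / s * ∫ t in Ioi (0 : ℝ), (t : ℂ) ^ n * cexp (-(s * t)) := by
          rw [hibp, ← integral_const_mul, sub_self, zero_sub, ← integral_neg]
          congr 1 with t; ring
      _ = (n + 1).factorial / s ^ (n + 1 + 1) := by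
          rw [ih, Nat.factorial_succ]; push_cast; field_simp; ring

section Fourier

open FourierTransform Real

/-- The function on `(-∞, 0]` whose Fourier transform is `u ↦ (u + i y)⁻ⁿ`. -/
noncomputable def invPowKernel (n : ℕ) (y : ℝ) : ℝ → ℂ :=
  (Iic 0).indicator fun t =>
    (-2 * π * I) ^ n / (n - 1).factorial * (-(t : ℂ)) ^ (n - 1) * cexp (2 * π * t * y)

lemma fourier_invPowKernel {n : ℕ} (hn : 1 ≤ n) {y : ℝ} (hy : 0 < y) (u : ℝ) :
    𝓕 (invPowKernel n y) u = (((u : ℂ) + I * y) ^ n)⁻¹ := by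
  set s : ℂ := -2 * π * I * ((u : ℂ) + I * y)
  have hs : 0 < s.re := by simp [s]; positivity
  rw [Real.fourier_real_eq_integral_exp_smul]
  simp_rw [invPowKernel, ← indicator_smul_apply (Iic 0) fun v : ℝ => cexp (↑(-2 * π * v * u) * I)]
  rw [integral_indicator measurableSet_Iic, ← neg_zero, ← integral_comp_neg_Ioi]
  calc ∫ t in Ioi (0 : ℝ), _
      = ∫ t in Ioi (0 : ℝ), (-2 * π * I) ^ n / (n - 1).factorial *
          ((t : ℂ) ^ (n - 1) * cexp (-(s * t))) := by
        refine setIntegral_congr_fun measurableSet_Ioi fun t _ => ?_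
        have hexp : -(s * t) = ↑(-2 * π * -t * u) * I + 2 * π * ((-t : ℝ) : ℂ) * y := by
          simp only [s]; push_cast; linear_combination (2 * π * t * y : ℂ) * I_sq
        rw [hexp, Complex.exp_add, smul_eq_mul]
        push_cast; ring
    _ = _ := by
        rw [integral_const_mul, integral_pow_mul_cexp_neg_mul_Ioi _ hs, Nat.sub_add_cancel hn]
        have hfac : ((n - 1).factorial : ℂ) ≠ 0 := by exact_mod_cast (n - 1).factorial_ne_zero
        have hI : (-2 * π * I : ℂ) ≠ 0 := by simp [pi_ne_zero]
        simp only [s, mul_pow]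
        field_simp

lemma integrable_invPowKernel (n : ℕ) {y : ℝ} (hy : 0 < y) : Integrable (invPowKernel n y) := by
  rw [invPowKernel, integrable_indicator_iff measurableSet_Iic,
    integrableOn_Iic_iff_integrableOn_Iio]
  have h : IntegrableOn (fun t : ℝ => (-2 * π * I) ^ n / (n - 1).factorial *
      ((t : ℂ) ^ (n - 1) * cexp (-(2 * π * y * t)))) (Ioi (-0)) := by
    rw [neg_zero]
    exact (integrableOn_pow_mul_cexp_neg_mul_Ioi (n - 1) (by simpa using by positivity)).const_mul _
  refine h.comp_neg_Iio.congr_fun (fun t _ => ?_) measurableSet_Iio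
  push_cast; ring_nf

lemma integrable_inv_add_I_mul_pow {n : ℕ} (hn : 2 ≤ n) {y : ℝ} (hy : 0 < y) :
    Integrable fun u : ℝ => (((u : ℂ) + I * y) ^ n)⁻¹ := by
  refine (integrable_inv_one_add_sq.const_mul (y ^ (n - 2) * min 1 (y ^ 2))⁻¹).mono'
    (by fun_prop) (ae_of_all _ fun u => ?_)
  set r := ‖(u : ℂ) + I * y‖
  have hyr : y ≤ r := by simpa [abs_of_pos hy] using abs_im_le_norm ((u : ℂ) + I * y)
  have hr2 : min 1 (y ^ 2) * (1 + u ^ 2) ≤ r ^ 2 := by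
    rw [Complex.sq_norm, normSq_apply]
    simp only [add_re, ofReal_re, mul_re, I_re, zero_mul, I_im, ofReal_im, mul_zero, sub_self,
      add_zero, add_im, mul_im, one_mul, zero_add]
    nlinarith [min_le_left 1 (y ^ 2), min_le_right 1 (y ^ 2), sq_nonneg u]
  have hrn : y ^ (n - 2) * (min 1 (y ^ 2) * (1 + u ^ 2)) ≤ r ^ n := by
    rw [← Nat.sub_add_cancel hn, pow_add, Nat.add_sub_cancel]
    gcongr
  rw [norm_inv, norm_pow, ← mul_inv, mul_assoc]
  exact inv_anti₀ (by positivity) hrn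

lemma continuousAt_invPowKernel (n : ℕ) (y : ℝ) {α : ℝ} (hα : α ≠ 0) :
    ContinuousAt (invPowKernel n y) α := by
  rcases hα.lt_or_gt with hneg | hpos
  · exact (Continuous.continuousAt (by fun_prop)).congr
      (eventuallyEq_of_mem (Iic_mem_nhds hneg) fun t ht => (indicator_of_mem (s := Iic 0) ht _).symm)
  · exact continuousAt_const.congr
      (eventuallyEq_of_mem (Ioi_mem_nhds hpos) fun t ht =>
        (indicator_of_notMem (s := Iic 0) (not_le.2 ht) _).symm)

lemma integral_cexp_mul_div_add_I_mul_pow {n : ℕ} (hn : 2 ≤ n) {y : ℝ} (hy : 0 < y) {α : ℝ}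
    (hα : α ≠ 0) :
    ∫ u : ℝ, cexp (2 * π * I * α * u) / ((u : ℂ) + I * y) ^ n = invPowKernel n y α := by
  have hF : 𝓕 (invPowKernel n y) = fun u : ℝ => (((u : ℂ) + I * y) ^ n)⁻¹ :=
    funext (fourier_invPowKernel (by omega) hy)
  rw [← (integrable_invPowKernel n hy).fourierInv_fourier_eq
    (hF ▸ integrable_inv_add_I_mul_pow hn hy) (continuousAt_invPowKernel n y hα), hF,
    fourierInv_eq_fourier_neg, fourier_real_eq_integral_exp_smul]
  congr 1 with u
  rw [smul_eq_mul, div_eq_mul_inv]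
  push_cast; ring_nf

end Fourier

lemma eq_upperTriangular_mul_rotMat (p q r s : ℝ) (hw : (s : ℂ) - r * I ≠ 0) :
    !![p, q; r, s] = !![(p * s - q * r) / ‖(s : ℂ) - r * I‖, (p * r + q * s) / ‖(s : ℂ) - r * I‖;
      0, ‖(s : ℂ) - r * I‖] * rotMat (arg ((s : ℂ) - r * I)) := by
  set w : ℂ := (s : ℂ) - r * I
  have hre : w.re = s := by simp [w]
  have him : w.im = -r := by simp [w]
  have hd : ‖w‖ ≠ 0 := norm_ne_zero_iff.2 hw
  have hd2 : ‖w‖ ^ 2 = s ^ 2 + r ^ 2 := by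
    rw [Complex.sq_norm, normSq_apply, hre, him]; ring
  rw [rotMat, cos_arg hw, sin_arg, hre, him]
  clear_value w
  ext i j
  fin_cases i <;> fin_cases j <;> simp <;> field_simp
  · linear_combination p * hd2
  · linear_combination q * hd2

lemma apply_eq_abs_det_pow_div_pow {m : ℕ} {f : Matrix (Fin 2) (Fin 2) ℝ → ℂ}
    (hf : ∀ a b d θ : ℝ, a ≠ 0 → d ≠ 0 →
      f (!![a, b; 0, d] * rotMat θ) = ((|a / d| : ℝ) : ℂ) ^ m * cexp (I * (2 * m : ℕ) * θ))
    {p q r s : ℝ} (hdet : p * s - q * r ≠ 0) :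
    f !![p, q; r, s] = ((|p * s - q * r| : ℝ) : ℂ) ^ m / ((s : ℂ) + r * I) ^ (2 * m) := by
  set w : ℂ := (s : ℂ) - r * I
  have hw : w ≠ 0 := by
    rintro hw0
    have hs : s = 0 := by simpa [w] using congrArg re hw0
    have hr : r = 0 := by simpa [w] using congrArg im hw0
    simp [hs, hr] at hdet
  have hd : ‖w‖ ≠ 0 := norm_ne_zero_iff.2 hw
  have hnorm_sq : ((‖w‖ : ℝ) : ℂ) ^ 2 = w * ((s : ℂ) + r * I) := by
    rw [← ofReal_pow, ← Complex.normSq_eq_norm_sq, ← mul_conj]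
    simp [w]
  have hphase : cexp (I * (2 * m : ℕ) * arg w) = (w / ‖w‖) ^ (2 * m) := by
    rw [show I * (2 * m : ℕ) * arg w = (2 * m : ℕ) * (arg w * I) by ring, Complex.exp_nat_mul,
      eq_div_of_mul_eq (ofReal_ne_zero.2 hd) (by rw [mul_comm, norm_mul_exp_arg_mul_I] :
        cexp (arg w * I) * ‖w‖ = w)]
  rw [eq_upperTriangular_mul_rotMat p q r s hw, hf _ _ _ _ (div_ne_zero hdet hd) hd, hphase,
    abs_div, abs_div, abs_norm]
  have hw' : (s : ℂ) + r * I ≠ 0 := by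
    rintro h; simp [h] at hnorm_sq; exact hw hnorm_sq
  rw [div_div, ← sq]
  push_cast
  rw [hnorm_sq, div_pow w, pow_mul (‖w‖ : ℂ), hnorm_sq, pow_mul w,
    pow_mul ((s : ℂ) + r * I), ← div_pow, ← div_pow, ← mul_pow]
  congr 1
  field_simp

lemma weyl_mul_unipotent_mul_torus (b x y : ℝ) :
    !![0, -1; 1, 0] * !![1, b; 0, 1] * (!![1, x; 0, 1] * !![y, 0; 0, 1]) =
      !![(0 : ℝ), -1; y, x + b] := by
  simp [add_comm]

open Real in
lemma integral_apply_weyl_mul_cexp {m : ℕ} (hm : 1 ≤ m) {f : Matrix (Fin 2) (Fin 2) ℝ → ℂ}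
    (hf : ∀ a b d θ : ℝ, a ≠ 0 → d ≠ 0 →
      f (!![a, b; 0, d] * rotMat θ) = ((|a / d| : ℝ) : ℂ) ^ m * cexp (I * (2 * m : ℕ) * θ))
    (x : ℝ) {y : ℝ} (hy : 0 < y) {α : ℝ} (hα : α ≠ 0) :
    ∫ b : ℝ, f (!![0, -1; 1, 0] * !![1, b; 0, 1] * (!![1, x; 0, 1] * !![y, 0; 0, 1])) *
        cexp (2 * π * I * α * b) =
      y ^ m * cexp (-(2 * π * I * α * x)) * invPowKernel (2 * m) y α := by
  calc _ = ∫ b : ℝ, y ^ m * cexp (-(2 * π * I * α * x)) *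
        (cexp (2 * π * I * α * ((b + x : ℝ) : ℂ)) / (((b + x : ℝ) : ℂ) + I * y) ^ (2 * m)) := by
        congr 1 with b
        rw [weyl_mul_unipotent_mul_torus,
          apply_eq_abs_det_pow_div_pow hf (by simpa using hy.ne')]
        have hshift : cexp (2 * π * I * α * b) =
            cexp (-(2 * π * I * α * x)) * cexp (2 * π * I * α * ((b + x : ℝ) : ℂ)) := by
          rw [← Complex.exp_add]; push_cast; ring_nf
        rw [hshift, zero_mul, zero_sub, neg_mul, one_mul, neg_neg, abs_of_pos hy]
        push_cast; ring
    _ = y ^ m * cexp (-(2 * π * I * α * x)) *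
          ∫ u : ℝ, cexp (2 * π * I * α * u) / ((u : ℂ) + I * y) ^ (2 * m) := by
        rw [integral_const_mul, integral_add_right_eq_self
          (fun u : ℝ => cexp (2 * π * I * α * u) / ((u : ℂ) + I * y) ^ (2 * m)) x]
    _ = _ := by rw [integral_cexp_mul_div_add_I_mul_pow (by omega) hy hα]

/-- The archimedean Whittaker integral of the weight-`k` vector `f = f_{(k-1)/2}^{(k)}`:
`∫_ℝ f(w n(b) n(x) a(y)) e^{2πiαb} db = (2πi)^k/(k-1)! · y^{k/2} |α|^{k-1} e^{-2πiα(x+iy)}`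
for `α < 0`, and the integral vanishes for `α > 0`.  Here `f` is determined by the Iwasawa
decomposition: `f(b r(θ)) = |a/d|^{(k-1)/2 + 1/2} e^{ikθ}`. -/
theorem stmt10 (k : ℤ) (hk : Even k) (hk2 : 2 ≤ k)
    (f : Matrix (Fin 2) (Fin 2) ℝ → ℂ)
    (hf : ∀ a b d θ : ℝ, a ≠ 0 → d ≠ 0 →
      f (!![a, b; 0, d] * rotMat θ) =
        ((|a / d| : ℝ) : ℂ) ^ (((k : ℂ) - 1) / 2 + 1 / 2) * Complex.exp (I * (k : ℂ) * (θ : ℂ)))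
    (x : ℝ) (y : ℝ) (hy : 0 < y) (α : ℝ) :
    (α < 0 →
      ∫ b : ℝ, f (!![0, -1; 1, 0] * !![1, b; 0, 1] * (!![1, x; 0, 1] * !![y, 0; 0, 1])) *
          Complex.exp (2 * Real.pi * I * (α : ℂ) * (b : ℂ)) =
        (2 * Real.pi * I) ^ k / ((k - 1).toNat.factorial : ℂ) * ((y : ℂ)) ^ ((k : ℂ) / 2) *
          ((|α| : ℝ) : ℂ) ^ (k - 1) *
          Complex.exp (-(2 * Real.pi * I * (α : ℂ) * ((x : ℂ) + I * (y : ℂ))))) ∧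
    (0 < α →
      ∫ b : ℝ, f (!![0, -1; 1, 0] * !![1, b; 0, 1] * (!![1, x; 0, 1] * !![y, 0; 0, 1])) *
          Complex.exp (2 * Real.pi * I * (α : ℂ) * (b : ℂ)) = 0) := by
  obtain ⟨m, rfl⟩ : ∃ m : ℕ, k = 2 * m := by
    obtain ⟨j, rfl⟩ := hk
    exact ⟨j.toNat, by omega⟩
  have hf' : ∀ a b d θ : ℝ, a ≠ 0 → d ≠ 0 →
      f (!![a, b; 0, d] * rotMat θ) = ((|a / d| : ℝ) : ℂ) ^ m * cexp (I * (2 * m : ℕ) * θ) := by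
    intro a b d θ ha hd
    rw [hf a b d θ ha hd, ← cpow_natCast]
    push_cast; ring_nf
  refine ⟨fun hα => ?_, fun hα => ?_⟩
  · rw [integral_apply_weyl_mul_cexp (by omega) hf' x hy hα.ne, invPowKernel, indicator_of_mem (mem_Iic.2 hα.le), abs_of_neg hα,
      show (2 * (m : ℤ) - 1).toNat = 2 * m - 1 by omega,
      show ((2 * (m : ℤ) : ℤ) : ℂ) / 2 = (m : ℕ) by push_cast; ring, cpow_natCast,
      show 2 * (m : ℤ) - 1 = ((2 * m - 1 : ℕ) : ℤ) by omega, zpow_natCast,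
      show 2 * (m : ℤ) = ((2 * m : ℕ) : ℤ) by push_cast; ring, zpow_natCast]
    have hexp : cexp (-(2 * Real.pi * I * α * (x + I * y))) =
        cexp (-(2 * Real.pi * I * α * x)) * cexp (2 * Real.pi * α * y) := by
      rw [← Complex.exp_add]; ring_nf; rw [I_sq]; ring_nf
    rw [hexp, show (-2 * Real.pi * I : ℂ) ^ (2 * m) = (2 * Real.pi * I) ^ (2 * m) by
      rw [pow_mul, pow_mul]; ring]
    push_cast; ring
  · rw [integral_apply_weyl_mul_cexp (by omega) hf' x hy hα.ne', invPowKernel, indicator_of_notMem (notMem_Iic.2 hα), mul_zero]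
end

section
/- Let $F$ be a non-archimedean local field with ring of integers $\mathfrak{o}$, uniformizer $\varpi$ and residue field of size $q$. Let $f$ be a function in the principal series $V_s = |\cdot|^s \times |\cdot|^{-s}$ of $\mathrm{GL}(2,F)$ that is invariant under $\Gamma_0(\mathfrak{p}) = K \cap \begin{pmatrix}\mathfrak{o}&\mathfrak{o}\\\mathfrak{p}&\mathfrak{o}\end{pmatrix}$. Then for $\alpha \in F^\times$ with $v(\alpha) \geq 0$ and $q^{2s}\neq 1$, the Whittaker integral $(W_s^\alpha f)(1) = \lim_{n\to\infty}\int_{\mathfrak{p}^{-n}} f\big(\begin{pmatrix}0&-1\\1&0\end{pmatrix}\begin{pmatrix}1&b\\0&1\end{pmatrix}\big)\psi(-\alpha b)\,db$ equals $f\big(\begin{pmatrix}0&-1\\1&0\end{pmatrix}\big) + f(1)\cdot\frac{|\alpha|^{2s}(1-q^{-2s-1}) + q^{-1} - 1}{1 - q^{2s}}$. -/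
/-!
Right translation by `n(u) = !![1, u; 0, 1]` with `|u| ≤ 1` lies in `Γ₀(𝔭)`, so the integrand
`f(w n(b)) ψ(-αb)` is constant on cosets of `𝔬` and the integral over `𝔭^{-n}` is a finite sum over
representatives of `𝔭^{-n}/𝔬`. For `|b| ≤ 1` the summand is `f(w)`; for `|b| > 1` the Iwasawa
decomposition `w n(b) = !![b⁻¹, -1; 0, b] * !![1, 0; b⁻¹, 1]` gives `f(w n(b)) = |b|^{-2s-1} f(1)`.
Summing by parts over the shells `|b| = q^j`, what remains are the character sums
`∑_{𝔭^{-j}/𝔬} ψ(-αb)`, equal to `q^j` for `j ≤ v(α)` and to `0` beyond it. A geometric sum then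
gives the same value for every `n > v(α)`.

All of this uses the ultrametric inequality, which holds for any absolute value with values in
`q^ℤ ∪ {0}`, `q ≥ 2`.
-/

open Complex Matrix MeasureTheory Filter Finset

namespace AbsoluteValue

variable {F : Type*} [Field F] {abv : AbsoluteValue F ℝ} {q : ℝ}

theorem zpow_add_one_le_of_zpow_lt (hq : 1 < q)
    (hdisc : ∀ x : F, x ≠ 0 → ∃ m : ℤ, abv x = q ^ m) {x : F} {m : ℤ} (h : q ^ m < abv x) :
    q ^ (m + 1) ≤ abv x := by
  have hx : x ≠ 0 := by
    rintro rfl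
    exact (zpow_pos (zero_lt_one.trans hq) m).not_ge (by simpa using h.le)
  obtain ⟨a, ha⟩ := hdisc x hx
  rw [ha] at h ⊢
  exact zpow_le_zpow_right₀ hq.le ((zpow_lt_zpow_iff_right₀ hq).1 h)

theorem eq_pow_succ_of_pow_lt_of_le (hq : 1 < q)
    (hdisc : ∀ x : F, x ≠ 0 → ∃ m : ℤ, abv x = q ^ m) {x : F} {m : ℕ}
    (hlt : q ^ m < abv x) (hle : abv x ≤ q ^ (m + 1)) : abv x = q ^ (m + 1) :=
  le_antisymm hle <| by
    exact_mod_cast zpow_add_one_le_of_zpow_lt hq hdisc (m := m) (by exact_mod_cast hlt)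

theorem exists_eq_zpow_neg_of_le_one (hq : 1 < q)
    (hdisc : ∀ x : F, x ≠ 0 → ∃ m : ℤ, abv x = q ^ m) {x : F} (hx : x ≠ 0) (hx1 : abv x ≤ 1) :
    ∃ k : ℕ, abv x = q ^ (-(k : ℤ)) := by
  obtain ⟨m, hm⟩ := hdisc x hx
  have hm0 : m ≤ 0 := by
    by_contra! h
    exact (one_lt_zpow₀ hq h).not_ge (hm ▸ hx1)
  exact ⟨m.natAbs, by rw [hm]; congr; omega⟩

theorem apply_two_ne_two_of_zpow (hdisc : ∀ x : F, x ≠ 0 → ∃ m : ℤ, abv x = 2 ^ m) :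
    abv (2 : F) ≠ 2 := by
  intro h2
  have h4 : abv (4 : F) = 4 := by
    rw [show (4 : F) = 2 * 2 by norm_num, map_mul, h2]
    norm_num
  have h3 : abv (3 : F) = 3 := by
    have hle := abv.add_le (2 : F) 1
    have hge := abv.add_le (3 : F) 1
    rw [map_one, h2] at hle
    rw [map_one, show (3 : F) + 1 = 4 by norm_num, h4] at hge
    norm_num at hle
    exact le_antisymm (by simpa [show (2 : F) + 1 = 3 by norm_num] using hle) (by linarith)
  have := zpow_add_one_le_of_zpow_lt one_lt_two hdisc (x := (3 : F)) (m := 1)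
    (by rw [h3]; norm_num)
  rw [h3] at this
  norm_num at this

/-- A violation `|x + y| > max |x| |y| =: M` forces `|x + y| ≥ q M ≥ 2 M ≥ |x| + |y|`, hence
`q = 2` and `|x| = |y| = M`; expanding `|(x + y)²| = 4 M²` then gives `|2| = 2`, hence
`|3| = 3`, which is not a power of `2`. -/
theorem isNonarchimedean_of_zpow (hq : 2 ≤ q)
    (hdisc : ∀ x : F, x ≠ 0 → ∃ m : ℤ, abv x = q ^ m) : IsNonarchimedean abv := by
  intro x y
  by_contra! h
  set M := max (abv x) (abv y)
  have hxM : abv x ≤ M := le_max_left _ _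
  have hyM : abv y ≤ M := le_max_right _ _
  have hM : 0 < M := by
    by_contra! hM
    have hx : x = 0 := abv.eq_zero.1 (le_antisymm (hxM.trans hM) (abv.nonneg x))
    have hy : y = 0 := abv.eq_zero.1 (le_antisymm (hyM.trans hM) (abv.nonneg y))
    simp [hx, hy, M] at h
  obtain ⟨z, hz⟩ : ∃ z, abv z = M :=
    (max_choice (abv x) (abv y)).elim (fun h => ⟨x, h.symm⟩) (fun h => ⟨y, h.symm⟩)
  obtain ⟨i, hi⟩ := hdisc z (abv.pos_iff.1 (hz ▸ hM))
  rw [hz] at hi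
  have hqM : q * M ≤ abv (x + y) := by
    have := zpow_add_one_le_of_zpow_lt (by linarith) hdisc (hi ▸ h)
    rwa [zpow_add_one₀ (by positivity), ← hi, mul_comm] at this
  have hsum := abv.add_le x y
  obtain rfl : q = 2 := by nlinarith
  have hx : abv x = M := by linarith
  have hy : abv y = M := by linarith
  have hxy : abv (x + y) = 2 * M := by linarith
  have h2 : 2 ≤ abv (2 : F) := by
    have hsq : abv ((x + y) * (x + y)) ≤ abv (x * x) + abv (2 * (x * y)) + abv (y * y) := by
      rw [show (x + y) * (x + y) = x * x + 2 * (x * y) + y * y by ring]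
      exact (abv.add_le _ _).trans (by linarith [abv.add_le (x * x) (2 * (x * y))])
    simp only [map_mul, hx, hy, hxy] at hsq
    nlinarith [mul_pos hM hM]
  have h2' : abv (2 : F) ≤ 2 := by
    simpa [one_add_one_eq_two] using abv.add_le (1 : F) 1
  exact apply_two_ne_two_of_zpow hdisc (le_antisymm h2' h2)

end AbsoluteValue

theorem IsNonarchimedean.abv_sub_le_max {F : Type*} [Field F] {abv : AbsoluteValue F ℝ}
    (hna : IsNonarchimedean abv) (a b c : F) :
    abv (a - c) ≤ max (abv (a - b)) (abv (b - c)) := by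
  simpa using hna (a - b) (b - c)

theorem Complex.ofReal_zpow_cpow {r : ℝ} (hr : 0 ≤ r) (m : ℤ) (z : ℂ) :
    ((r ^ m : ℝ) : ℂ) ^ z = ((r : ℂ) ^ z) ^ m := by
  rw [← Real.rpow_intCast, ← cpow_mul_ofReal_nonneg hr, ofReal_intCast, cpow_int_mul]

namespace AddChar

variable {F : Type*} [Field F] {abv : AbsoluteValue F ℝ} {q : ℝ} {ψ : AddChar F ℂ}

theorem eq_of_abv_sub_le_one (hψ : ∀ x, abv x ≤ 1 → ψ x = 1) {x y : F}
    (h : abv (x - y) ≤ 1) : ψ x = ψ y := by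
  rw [← add_sub_cancel y x, map_add_eq_mul, hψ _ h, mul_one]

theorem mulShift_eq_one_of_abv_le (hψ : ∀ x, abv x ≤ 1 → ψ x = 1) {k : ℕ} {a : F}
    (ha : abv a = q ^ (-(k : ℤ))) (hq : 0 < q) {x : F} (hx : abv x ≤ q ^ k) :
    ψ.mulShift a x = 1 := by
  rw [mulShift_apply]
  refine hψ _ ?_
  rw [map_mul, ha, _root_.zpow_neg, zpow_natCast, inv_mul_le_iff₀ (by positivity), mul_one]
  exact hx

theorem exists_mulShift_ne_one (hψ : ∃ x, abv x ≤ q ∧ ψ x ≠ 1) {k : ℕ} {a : F} (ha0 : a ≠ 0)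
    (ha : abv a = q ^ (-(k : ℤ))) : ∃ y, abv y ≤ q ^ (k + 1) ∧ ψ.mulShift a y ≠ 1 := by
  obtain ⟨x, hx, hψx⟩ := hψ
  refine ⟨a⁻¹ * x, ?_, by simpa [← mul_assoc, ha0] using hψx⟩
  rw [map_mul, map_inv₀, ha, _root_.zpow_neg, inv_inv, zpow_natCast, pow_succ]
  exact mul_le_mul_of_nonneg_left hx (pow_nonneg ((abv.nonneg x).trans hx) k)

end AddChar

theorem sum_range_pow_mul_sub_ite {K : Type*} [Field K] {w Q : K} (hQ : Q ≠ 0) (hw : w ≠ 0)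
    (hwQ : w * Q ≠ 1) {k n : ℕ} (hkn : k < n) :
    ∑ j ∈ range n, w ^ (j + 1) *
        ((if j + 1 ≤ k then Q ^ (j + 1) else 0) - if j ≤ k then Q ^ j else 0)
      = ((w * Q) ^ k * (1 - w) + Q⁻¹ - 1) / (1 - (w * Q)⁻¹) := by
  obtain ⟨d, rfl⟩ : ∃ d, n = k + 1 + d := ⟨n - (k + 1), by omega⟩
  have htail : ∑ i ∈ range d, w ^ (k + 1 + i + 1) * ((if k + 1 + i + 1 ≤ k then
      Q ^ (k + 1 + i + 1) else 0) - if k + 1 + i ≤ k then Q ^ (k + 1 + i) else 0) = 0 :=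
    sum_eq_zero fun i _ => by
      simp [show ¬k + 1 + i + 1 ≤ k by omega, show ¬k + 1 + i ≤ k by omega]
  have hhead : ∀ j ∈ range k, w ^ (j + 1) * ((if j + 1 ≤ k then Q ^ (j + 1) else 0) -
      if j ≤ k then Q ^ j else 0) = (1 - Q⁻¹) * (w * Q) ^ (j + 1) := fun j hj => by
    rw [if_pos (by simp at hj; omega), if_pos (by simp at hj; omega)]
    field_simp
    ring
  have hgeom : (∑ j ∈ range k, (w * Q) ^ (j + 1)) * (w * Q - 1) = (w * Q) ^ (k + 1) - w * Q := by
    rw [show ∑ j ∈ range k, (w * Q) ^ (j + 1) = (∑ j ∈ range k, (w * Q) ^ j) * (w * Q) by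
      simp only [sum_mul, pow_succ], mul_right_comm, geom_sum_mul]
    ring
  rw [sum_range_add, htail, add_zero, sum_range_succ, sum_congr rfl hhead, ← mul_sum,
    if_neg (by omega), if_pos le_rfl,
    show 1 - (w * Q)⁻¹ = (w * Q - 1) / (w * Q) by field_simp, div_div_eq_mul_div,
    eq_div_iff (sub_ne_zero.2 hwQ)]
  linear_combination (1 - Q⁻¹) * hgeom - (w * Q) ^ k * w * mul_inv_cancel₀ hQ

/-- `T` is a set of representatives of `{x | abv x ≤ R}` modulo the closed unit ball `𝔬`;
for `R = q ^ n` this is `𝔭^{-n}/𝔬`. -/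
structure IsUnitBallReps {F : Type*} [Field F] (abv : AbsoluteValue F ℝ) (R : ℝ)
    (T : Finset F) : Prop where
  cover : {x : F | abv x ≤ R} = ⋃ c ∈ T, {x : F | abv (x - c) ≤ 1}
  sep : ∀ c ∈ T, ∀ c' ∈ T, c ≠ c' → 1 < abv (c - c')

namespace IsUnitBallReps

variable {F : Type*} [Field F] {abv : AbsoluteValue F ℝ} {R : ℝ} {q : ℕ} {T : Finset F}

theorem exists_abv_sub_le (hT : IsUnitBallReps abv R T) {x : F} (hx : abv x ≤ R) :
    ∃ c ∈ T, abv (x - c) ≤ 1 := by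
  have : x ∈ ⋃ c ∈ T, {x : F | abv (x - c) ≤ 1} := hT.cover ▸ hx
  simpa using this

theorem abv_le (hT : IsUnitBallReps abv R T) {c : F} (hc : c ∈ T) : abv c ≤ R := by
  have : c ∈ ⋃ c' ∈ T, {x : F | abv (x - c') ≤ 1} := Set.mem_biUnion hc (by simp)
  rw [← hT.cover] at this
  exact this

theorem eq_of_abv_sub_le (hna : IsNonarchimedean abv) (hT : IsUnitBallReps abv R T)
    {c c' x : F} (hc : c ∈ T) (hc' : c' ∈ T) (h : abv (x - c) ≤ 1) (h' : abv (x - c') ≤ 1) :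
    c = c' := by
  by_contra hne
  refine (hT.sep c hc c' hc' hne).not_ge ((hna.abv_sub_le_max c x c').trans (max_le ?_ h'))
  rwa [abv.map_sub]

theorem pairwiseDisjoint (hna : IsNonarchimedean abv) (hT : IsUnitBallReps abv R T) :
    (T : Set F).PairwiseDisjoint fun c => {x : F | abv (x - c) ≤ 1} :=
  fun _ hc _ hc' hne => Set.disjoint_left.2 fun _ hx hx' =>
    hne (hT.eq_of_abv_sub_le hna hc hc' hx hx')

theorem filter (hna : IsNonarchimedean abv) (hT : IsUnitBallReps abv R T) {R' : ℝ}
    (h1 : 1 ≤ R') (hR : R' ≤ R) : IsUnitBallReps abv R' (T.filter (abv · ≤ R')) where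
  cover := by
    ext x
    simp only [Set.mem_ofPred_eq, Set.mem_iUnion, mem_filter, exists_prop]
    constructor
    · intro hx
      obtain ⟨c, hc, hxc⟩ := hT.exists_abv_sub_le (hx.trans hR)
      refine ⟨c, ⟨hc, ?_⟩, hxc⟩
      simpa using (hna.abv_sub_le_max c x 0).trans
        (max_le (by rw [abv.map_sub]; exact hxc.trans h1) (by simpa))
    · rintro ⟨c, ⟨-, hc⟩, hxc⟩
      simpa using (hna.abv_sub_le_max x c 0).trans (max_le (hxc.trans h1) (by simpa))
  sep c hc c' hc' := hT.sep c (mem_filter.1 hc).1 c' (mem_filter.1 hc').1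

theorem card_le (hna : IsNonarchimedean abv) (hT : IsUnitBallReps abv R T) {T' : Finset F}
    (hT' : IsUnitBallReps abv R T') : T.card ≤ T'.card := by
  choose! r hr hrc using fun c (hc : c ∈ T) => hT'.exists_abv_sub_le (hT.abv_le hc)
  refine card_le_card_of_injOn r hr fun c hc c' hc' hcc' => ?_
  refine hT.eq_of_abv_sub_le hna hc hc' (x := r c) ?_ ?_
  · rw [abv.map_sub]
    exact hrc c hc
  · rw [abv.map_sub, hcc']
    exact hrc c' hc'

theorem card_eq (hna : IsNonarchimedean abv) (hT : IsUnitBallReps abv R T) {T' : Finset F}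
    (hT' : IsUnitBallReps abv R T') : T.card = T'.card :=
  le_antisymm (hT.card_le hna hT') (hT'.card_le hna hT)

theorem setIntegral_eq_sum {E : Type*} [NormedAddCommGroup E] [NormedSpace ℝ E]
    [CompleteSpace E] [MeasurableSpace F] {μ : Measure F} (hna : IsNonarchimedean abv)
    (hT : IsUnitBallReps abv R T) (hμ : ∀ c, μ {x | abv (x - c) ≤ 1} = 1)
    (hmeas : ∀ c, MeasurableSet {x : F | abv (x - c) ≤ 1}) {g : F → E}
    (hg : ∀ x c, abv (x - c) ≤ 1 → g x = g c) :
    ∫ x in {x | abv x ≤ R}, g x ∂μ = ∑ c ∈ T, g c := by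
  have hint : ∀ c ∈ T, IntegrableOn g {x | abv (x - c) ≤ 1} μ := fun c _ =>
    (integrableOn_const (by simp [hμ])).congr_fun (fun x hx => (hg x c hx).symm) (hmeas c)
  rw [hT.cover, integral_biUnion_finset T (fun c _ => hmeas c) (hT.pairwiseDisjoint hna) hint]
  refine sum_congr rfl fun c _ => ?_
  rw [setIntegral_congr_fun (hmeas c) (fun x hx => hg x c hx), setIntegral_const,
    measureReal_def, hμ]
  simp

/-- Translation by `y` permutes `T` modulo `𝔬`, so it multiplies the sum by `χ y ≠ 1`. -/
theorem sum_addChar_eq_zero (hna : IsNonarchimedean abv) (hT : IsUnitBallReps abv R T)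
    {χ : AddChar F ℂ} (hχ : ∀ x, abv x ≤ 1 → χ x = 1) {y : F} (hy : abv y ≤ R)
    (hχy : χ y ≠ 1) : ∑ c ∈ T, χ c = 0 := by
  classical
  choose! σ hσ hσc using fun c (hc : c ∈ T) =>
    hT.exists_abv_sub_le (x := c + y) ((hna c y).trans (max_le (hT.abv_le hc) hy))
  have hinj : Set.InjOn σ T := fun c hc c' hc' h => by
    refine hT.eq_of_abv_sub_le hna hc hc' (x := σ c - y) ?_ ?_
    · rw [abv.map_sub, show c - (σ c - y) = c + y - σ c by ring]
      exact hσc c hc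
    · rw [h, abv.map_sub, show c' - (σ c' - y) = c' + y - σ c' by ring]
      exact hσc c' hc'
  have himage : T.image σ = T :=
    eq_of_subset_of_card_le (image_subset_iff.2 hσ) (card_image_of_injOn hinj).ge
  have hshift : ∑ c ∈ T, χ c = χ y * ∑ c ∈ T, χ c := calc
    ∑ c ∈ T, χ c = ∑ c ∈ T, χ (σ c) := by
      conv_lhs => rw [← himage]
      exact sum_image hinj
    _ = ∑ c ∈ T, χ (c + y) := sum_congr rfl fun c hc =>
      AddChar.eq_of_abv_sub_le_one hχ (by rw [abv.map_sub]; exact hσc c hc)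
    _ = χ y * ∑ c ∈ T, χ c := by
      simp only [mul_sum, AddChar.map_add_eq_mul, mul_comm]
  have : (χ y - 1) * ∑ c ∈ T, χ c = 0 := by linear_combination hshift.symm
  exact (mul_eq_zero.1 this).resolve_left (sub_ne_zero.2 hχy)

theorem sum_addChar_eq_ite (hna : IsNonarchimedean abv) (hq : 1 < q) {j k : ℕ}
    (hT : IsUnitBallReps abv ((q : ℝ) ^ j) T) (hcard : T.card = q ^ j) {χ : AddChar F ℂ}
    (hχk : ∀ x, abv x ≤ (q : ℝ) ^ k → χ x = 1)
    (hχnt : ∃ y, abv y ≤ (q : ℝ) ^ (k + 1) ∧ χ y ≠ 1) :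
    ∑ c ∈ T, χ c = if j ≤ k then (q : ℂ) ^ j else 0 := by
  have hq1 : (1 : ℝ) ≤ q := by exact_mod_cast hq.le
  split_ifs with hjk
  · rw [sum_congr rfl fun c hc => hχk c ((hT.abv_le hc).trans (pow_le_pow_right₀ hq1 hjk)),
      sum_const, hcard]
    simp
  · obtain ⟨y, hy, hχy⟩ := hχnt
    exact hT.sum_addChar_eq_zero hna (fun x hx => hχk x (hx.trans (one_le_pow₀ hq1)))
      (hy.trans (pow_le_pow_right₀ hq1 (by omega))) hχy

/-- On the shell `|c| = q ^ (j + 1)` the summand is `B w ^ (j + 1) χ c` with `w = q ^ z`, so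
summing by parts along `T_j = {c ∈ T | |c| ≤ q ^ j}` leaves the character sums over the `T_j`. -/
theorem sum_mul_addChar_eq (hna : IsNonarchimedean abv) (hq : 1 < q)
    (hdisc : ∀ x : F, x ≠ 0 → ∃ m : ℤ, abv x = (q : ℝ) ^ m)
    (hreps : ∀ j : ℕ, ∃ T : Finset F, T.card = q ^ j ∧ IsUnitBallReps abv ((q : ℝ) ^ j) T)
    {k n : ℕ} (hkn : k < n) (hT : IsUnitBallReps abv ((q : ℝ) ^ n) T) {χ : AddChar F ℂ}
    (hχk : ∀ x, abv x ≤ (q : ℝ) ^ k → χ x = 1)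
    (hχnt : ∃ y, abv y ≤ (q : ℝ) ^ (k + 1) ∧ χ y ≠ 1) {φ : F → ℂ} {A B z : ℂ}
    (hφ1 : ∀ x, abv x ≤ 1 → φ x = A)
    (hφ : ∀ x, (q : ℝ) ≤ abv x → φ x = ((abv x : ℝ) : ℂ) ^ z * B) (hz : (q : ℂ) ^ z * q ≠ 1) :
    ∑ c ∈ T, φ c * χ c = A + B * ((((q : ℂ) ^ z * q) ^ k * (1 - (q : ℂ) ^ z) + (q : ℂ)⁻¹ - 1)
      / (1 - ((q : ℂ) ^ z * q)⁻¹)) := by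
  classical
  have hq1 : (1 : ℝ) < q := by exact_mod_cast hq
  have hq0 : (q : ℂ) ≠ 0 := by exact_mod_cast (by omega : q ≠ 0)
  set Ts : ℕ → Finset F := fun j => T.filter (abv · ≤ (q : ℝ) ^ j) with hTs_def
  set S : ℕ → ℂ := fun j => if j ≤ k then (q : ℂ) ^ j else 0
  have hS : ∀ j ≤ n, ∑ c ∈ Ts j, χ c = S j := fun j hj => by
    have hTj := hT.filter hna (one_le_pow₀ hq1.le) (pow_le_pow_right₀ hq1.le hj)
    obtain ⟨T', hT'card, hT'⟩ := hreps j
    exact hTj.sum_addChar_eq_ite hna hq (by rw [hTj.card_eq hna hT', hT'card]) hχk hχnt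
  have hstep : ∀ j < n, ∑ c ∈ Ts (j + 1), φ c * χ c - ∑ c ∈ Ts j, φ c * χ c
      = B * ((q : ℂ) ^ z) ^ (j + 1) * (S (j + 1) - S j) := by
    intro j hj
    have hsub : Ts j ⊆ Ts (j + 1) := fun c hc => by
      simp only [hTs_def, mem_filter] at hc ⊢
      exact ⟨hc.1, hc.2.trans (pow_le_pow_right₀ hq1.le j.le_succ)⟩
    have hshell : ∀ c ∈ Ts (j + 1) \ Ts j, φ c * χ c = B * ((q : ℂ) ^ z) ^ (j + 1) * χ c := by
      intro c hc
      simp only [hTs_def, Finset.mem_sdiff, mem_filter, not_and, not_le] at hc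
      have hc' := AbsoluteValue.eq_pow_succ_of_pow_lt_of_le hq1 hdisc (hc.2 hc.1.1) hc.1.2
      rw [hφ c (hc' ▸ le_self_pow₀ hq1.le (by omega)), hc', ← zpow_natCast,
        Complex.ofReal_zpow_cpow (by positivity), zpow_natCast, ofReal_natCast]
      ring
    rw [← sum_sdiff_eq_sub hsub, sum_congr rfl hshell, ← mul_sum, sum_sdiff_eq_sub hsub,
      hS j hj.le, hS (j + 1) hj]
  have h0 : ∑ c ∈ Ts 0, φ c * χ c = A := by
    rw [sum_congr rfl fun c hc => by rw [hφ1 c (by simpa [hTs_def] using (mem_filter.1 hc).2)],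
      ← mul_sum, hS 0 n.zero_le]
    simp [S]
  have hTn : Ts n = T := filter_true_of_mem fun c hc => hT.abv_le hc
  rw [← hTn, eq_sum_range_sub (fun j => ∑ c ∈ Ts j, φ c * χ c) n, h0,
    ← sum_range_pow_mul_sub_ite hq0 (by simp [hq0]) hz hkn, mul_sum]
  exact congrArg _ (sum_congr rfl fun j hj => by rw [hstep j (mem_range.1 hj)]; ring)

end IsUnitBallReps

theorem setIntegral_mul_addChar_eq {F : Type*} [Field F] [MeasurableSpace F]
    {abv : AbsoluteValue F ℝ} {q : ℕ} {μ : Measure F} (hna : IsNonarchimedean abv) (hq : 1 < q)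
    (hdisc : ∀ x : F, x ≠ 0 → ∃ m : ℤ, abv x = (q : ℝ) ^ m)
    (hreps : ∀ j : ℕ, ∃ T : Finset F, T.card = q ^ j ∧ IsUnitBallReps abv ((q : ℝ) ^ j) T)
    (hμ1 : μ {x : F | abv x ≤ 1} = 1) (hμinv : ∀ (t : F) (s : Set F), μ ((t + ·) ⁻¹' s) = μ s)
    (hmeas : ∀ c : F, MeasurableSet {x : F | abv (x - c) ≤ 1}) {k n : ℕ} (hkn : k < n)
    {χ : AddChar F ℂ} (hχk : ∀ x, abv x ≤ (q : ℝ) ^ k → χ x = 1)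
    (hχnt : ∃ y, abv y ≤ (q : ℝ) ^ (k + 1) ∧ χ y ≠ 1) {φ : F → ℂ} {B z : ℂ}
    (hφinv : ∀ x c, abv (x - c) ≤ 1 → φ x = φ c)
    (hφ : ∀ x, (q : ℝ) ≤ abv x → φ x = ((abv x : ℝ) : ℂ) ^ z * B) (hz : (q : ℂ) ^ z * q ≠ 1) :
    ∫ x in {x | abv x ≤ (q : ℝ) ^ n}, φ x * χ x ∂μ = φ 0 + B * ((((q : ℂ) ^ z * q) ^ k *
      (1 - (q : ℂ) ^ z) + (q : ℂ)⁻¹ - 1) / (1 - ((q : ℂ) ^ z * q)⁻¹)) := by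
  have hball : ∀ c, μ {x | abv (x - c) ≤ 1} = 1 := fun c => by
    rw [← hμ1, ← hμinv (-c) {x | abv x ≤ 1}]
    congr 1
    ext x
    simp [neg_add_eq_sub]
  have hχ1 : ∀ x, abv x ≤ 1 → χ x = 1 := fun x hx =>
    hχk x (hx.trans (one_le_pow₀ (by exact_mod_cast hq.le)))
  obtain ⟨T, -, hT⟩ := hreps n
  rw [hT.setIntegral_eq_sum hna hball hmeas fun x c h => by
    rw [hφinv x c h, AddChar.eq_of_abv_sub_le_one hχ1 h]]
  exact hT.sum_mul_addChar_eq hna hq hdisc hreps hkn hχk hχnt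
    (fun x hx => hφinv x 0 (by simpa using hx)) hφ hz

section PrincipalSeries

variable {F : Type*} [Field F] {abv : AbsoluteValue F ℝ} {q : ℝ}
  {f : Matrix (Fin 2) (Fin 2) F → ℂ}

theorem apply_mul_unipotent_eq (hq : 0 ≤ q)
    (hΓ : ∀ (g κ : Matrix (Fin 2) (Fin 2) F),
      abv (κ 0 0) ≤ 1 → abv (κ 0 1) ≤ 1 → abv (κ 1 0) ≤ q⁻¹ → abv (κ 1 1) ≤ 1 →
      abv κ.det = 1 → f (g * κ) = f g)
    (g : Matrix (Fin 2) (Fin 2) F) {b c : F} (h : abv (b - c) ≤ 1) :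
    f (g * !![1, b; 0, 1]) = f (g * !![1, c; 0, 1]) := by
  have hn : !![(1 : F), b; 0, 1] = !![1, c; 0, 1] * !![1, b - c; 0, 1] := by
    ext i j
    fin_cases i <;> fin_cases j <;> simp
  rw [hn, ← Matrix.mul_assoc]
  exact hΓ _ _ (by simp) (by simpa using h) (by simpa using hq) (by simp)
    (by simp [det_fin_two_of])

theorem apply_weyl_mul_unipotent_of_le_abv {s : ℂ} (hq : 0 < q)
    (htrans : ∀ (a d : F), a ≠ 0 → d ≠ 0 → ∀ (b : F) (g : Matrix (Fin 2) (Fin 2) F),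
      f (!![a, b; 0, d] * g) = ((abv (a * d⁻¹) : ℝ) : ℂ) ^ (s + 1 / 2) * f g)
    (hΓ : ∀ (g κ : Matrix (Fin 2) (Fin 2) F),
      abv (κ 0 0) ≤ 1 → abv (κ 0 1) ≤ 1 → abv (κ 1 0) ≤ q⁻¹ → abv (κ 1 1) ≤ 1 →
      abv κ.det = 1 → f (g * κ) = f g)
    {b : F} (hb : q ≤ abv b) :
    f (!![0, -1; 1, 0] * !![1, b; 0, 1]) = ((abv b : ℝ) : ℂ) ^ (-(2 * s) - 1) * f 1 := by
  have hb0 : b ≠ 0 := by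
    rintro rfl
    exact hq.not_ge (by simpa using hb)
  have hiwasawa :
      !![(0 : F), -1; 1, 0] * !![1, b; 0, 1] = !![b⁻¹, -1; 0, b] * !![1, 0; b⁻¹, 1] := by
    ext i j
    fin_cases i <;> fin_cases j <;> simp [Matrix.mul_apply, hb0]
  have hκ : f !![1, 0; b⁻¹, 1] = f 1 := by
    simpa using hΓ 1 !![1, 0; b⁻¹, 1] (by simp) (by simp) (by simpa using inv_anti₀ hq hb)
      (by simp) (by simp [det_fin_two_of])
  rw [hiwasawa, htrans _ _ (inv_ne_zero hb0) hb0, hκ, ← _root_.zpow_neg_one,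
    ← zpow_add₀ hb0, map_zpow₀, Complex.ofReal_zpow_cpow (abv.nonneg b), ← cpow_int_mul]
  congr 2
  push_cast
  ring

end PrincipalSeries

/-- Evaluation of the local Whittaker integral for a `Γ₀(𝔭)`-invariant vector `f` in the
principal series `V_s` of `GL(2,F)`, `F` a non-archimedean local field with residue
cardinality `q`: for `α ∈ F^×` with `v(α) ≥ 0` and `q^{2s} ≠ 1`, the integrals
`∫_{𝔭^{-n}} f(w n(b)) ψ(-αb) db` stabilize (converge) to
`f(w) + f(1) (|α|^{2s}(1-q^{-2s-1}) + q⁻¹ - 1)/(1 - q^{2s})`. -/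
theorem stmt12 {F : Type*} [Field F] [MeasurableSpace F]
    (abv : AbsoluteValue F ℝ) (q : ℕ) (hq : 1 < q)
    (hdisc : ∀ x : F, x ≠ 0 → ∃ m : ℤ, abv x = (q : ℝ) ^ m)
    (μ : Measure F)
    (hμ1 : μ {x : F | abv x ≤ 1} = 1)
    (hμinv : ∀ (t : F) (s : Set F), μ ((t + ·) ⁻¹' s) = μ s)
    (hmeas : ∀ (c : F) (r : ℝ), MeasurableSet {x : F | abv (x - c) ≤ r})
    (hcoset : ∀ n : ℕ, ∃ T : Finset F, T.card = q ^ n ∧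
      ({x : F | abv x ≤ (q : ℝ) ^ n} = ⋃ c ∈ T, {x : F | abv (x - c) ≤ 1}) ∧
      ∀ c ∈ T, ∀ c' ∈ T, c ≠ c' → 1 < abv (c - c'))
    (ψ : F → ℂ)
    (hψtriv : ∀ x : F, abv x ≤ 1 → ψ x = 1)
    (hψnt : ∃ x : F, abv x ≤ (q : ℝ) ∧ ψ x ≠ 1)
    (hψadd : ∀ x y : F, ψ (x + y) = ψ x * ψ y)
    (s : ℂ) (hs : (((q : ℝ)) : ℂ) ^ (2 * s) ≠ 1)
    (f : Matrix (Fin 2) (Fin 2) F → ℂ)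
    (htrans : ∀ (a d : F), a ≠ 0 → d ≠ 0 → ∀ (b : F) (g : Matrix (Fin 2) (Fin 2) F),
      f (!![a, b; 0, d] * g) = ((abv (a * d⁻¹) : ℝ) : ℂ) ^ (s + 1 / 2) * f g)
    (hΓ : ∀ (g κ : Matrix (Fin 2) (Fin 2) F),
      abv (κ 0 0) ≤ 1 → abv (κ 0 1) ≤ 1 → abv (κ 1 0) ≤ ((q : ℝ))⁻¹ → abv (κ 1 1) ≤ 1 →
      abv κ.det = 1 → f (g * κ) = f g)
    (α : F) (hα : α ≠ 0) (hαint : abv α ≤ 1) :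
    Tendsto (fun n : ℕ =>
        ∫ b in {b : F | abv b ≤ (q : ℝ) ^ n},
          f (!![0, -1; 1, 0] * !![1, b; 0, 1]) * ψ (-(α * b)) ∂μ)
      atTop
      (nhds (f !![0, -1; 1, 0] + f 1 *
        ((((abv α : ℝ) : ℂ) ^ (2 * s) * (1 - (((q : ℝ)) : ℂ) ^ (-(2 * s) - 1)) +
            ((q : ℂ))⁻¹ - 1) / (1 - (((q : ℝ)) : ℂ) ^ (2 * s))))) := by
  have hq1 : (1 : ℝ) < q := by exact_mod_cast hq
  have hq0 : (q : ℂ) ≠ 0 := by exact_mod_cast (by omega : q ≠ 0)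
  have hna : IsNonarchimedean abv :=
    AbsoluteValue.isNonarchimedean_of_zpow (by exact_mod_cast hq) hdisc
  obtain ⟨k, hk⟩ := AbsoluteValue.exists_eq_zpow_neg_of_le_one hq1 hdisc hα hαint
  have hk' : abv (-α) = (q : ℝ) ^ (-(k : ℤ)) := by rwa [abv.map_neg]
  let ψ' : AddChar F ℂ :=
    { toFun := ψ, map_zero_eq_one' := hψtriv 0 (by simp), map_add_eq_mul' := hψadd }
  have hψ' : ∀ b, ψ (-(α * b)) = ψ'.mulShift (-α) b := fun b => by simp [ψ']
  have hzq : (q : ℂ) ^ (-(2 * s) - 1) * q = ((q : ℂ) ^ (2 * s))⁻¹ := by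
    rw [cpow_sub _ _ hq0, cpow_one, cpow_neg, div_mul_cancel₀ _ hq0]
  refine tendsto_const_nhds.congr' (eventually_atTop.2 ⟨k + 1, fun n hn => ?_⟩)
  simp only [hψ', ofReal_natCast]
  rw [setIntegral_mul_addChar_eq hna hq hdisc
      (fun j => (hcoset j).imp fun T hT => ⟨hT.1, hT.2.1, hT.2.2⟩) hμ1 hμinv (fun c => hmeas c 1)
      hn (fun x => AddChar.mulShift_eq_one_of_abv_le hψtriv hk' (by positivity))
      (AddChar.exists_mulShift_ne_one hψnt (neg_ne_zero.2 hα) hk')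
      (fun x c h => apply_mul_unipotent_eq (by positivity) hΓ _ h)
      (fun x hx => apply_weyl_mul_unipotent_of_le_abv (by positivity) htrans hΓ hx)
      (by rw [hzq]; exact inv_ne_one.2 hs),
    ← Matrix.one_fin_two, Matrix.mul_one, hk, Complex.ofReal_zpow_cpow (by positivity),
    ofReal_natCast, hzq, inv_inv, _root_.zpow_neg, zpow_natCast, inv_pow]
end

section
/- For a nonzero even integer $k$, the renormalized archimedean intertwining operator at $s = 1/2$ satisfies $\tilde A_{1/2} f_{1/2}^{(k)} = -\frac{\pi}{|k|}\, f_{-1/2}^{(k)}$, where $\tilde A_{1/2} f := \lim_{s\to 1/2} \zeta(2s)\,(A_s f_s)$ along the flat section $f_s$ with $f_{1/2} = f$, and $A_s f_s^{(k)} = (-1)^{k/2}\sqrt{\pi}\,\frac{\Gamma(s)\Gamma(s+1/2)}{\Gamma(s+(1+k)/2)\Gamma(s+(1-k)/2)}\, f_{-s}^{(k)}$. Equivalently: $\lim_{s\to 1/2}\zeta(2s)\,(-1)^{k/2}\sqrt{\pi}\,\frac{\Gamma(s)\Gamma(s+1/2)}{\Gamma(s+(1+k)/2)\Gamma(s+(1-k)/2)}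 = -\frac{\pi}{|k|}$. -/
/-!
Write `k = ±2n` with `n ≥ 1`. Of the two Gamma factors in the denominator only `Γ(s + 1/2 - n)`
has a pole at `s = 1/2`, and the reflection formula turns its reciprocal into
`(-1)^n cos(πs) Γ(n + 1/2 - s) / π`. The expression thus becomes `ζ(2s) cos(πs)` times a function
continuous at `1/2`, whose value there is `Γ(1/2)² Γ(n) / (π Γ(n + 1)) = 1/n`. The simple pole of
`ζ(2s)` (residue `1/2`) against the simple zero of `cos(πs)` (derivative `-π`) gives
`ζ(2s) cos(πs) → -π/2`.
-/

open Complex Filter Topology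
open scoped Real

namespace Complex

lemma continuousAt_Gamma_of_re_pos {s : ℂ} (hs : 0 < s.re) : ContinuousAt Gamma s := by
  refine (differentiableAt_Gamma s fun m hm => ?_).continuousAt
  simp only [hm, neg_re, natCast_re, Left.neg_pos_iff] at hs
  exact absurd hs (not_lt.mpr m.cast_nonneg)

lemma Gamma_one_half_eq_ofReal_sqrt : Gamma (1 / 2) = (√π : ℂ) := by
  rw [show (1 / 2 : ℂ) = ((1 / 2 : ℝ) : ℂ) by norm_num, Gamma_ofReal, Real.Gamma_one_half_eq]

lemma inv_Gamma_eq_sin_mul_Gamma_one_sub {z : ℂ} (hz : ∀ m : ℕ, 1 - z ≠ -m) :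
    (Gamma z)⁻¹ = sin (π * z) * Gamma (1 - z) / π := by
  have hπ : (π : ℂ) ≠ 0 := ofReal_ne_zero.mpr Real.pi_ne_zero
  have hΓ : Gamma (1 - z) ≠ 0 := Gamma_ne_zero hz
  have hrefl := Gamma_mul_Gamma_one_sub z
  rcases eq_or_ne (sin (π * z)) 0 with hsin | hsin
  · rw [hsin, div_zero, mul_eq_zero, or_iff_left hΓ] at hrefl
    simp [hrefl, hsin]
  · rw [eq_div_iff hsin] at hrefl
    have hΓz : Gamma z ≠ 0 := by
      rintro h
      simp [h, hπ.symm] at hrefl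
    field_simp
    linear_combination -hrefl

lemma inv_Gamma_add_half_sub_nat (n : ℕ) {s : ℂ} (hs : s.re < n + 1 / 2) :
    (Gamma (s + 1 / 2 - n))⁻¹ = (-1) ^ n * cos (π * s) * Gamma (n + 1 / 2 - s) / π := by
  rw [inv_Gamma_eq_sin_mul_Gamma_one_sub, ← sin_add_pi_div_two,
    show (π : ℂ) * (s + 1 / 2 - n) = π * s + π / 2 - n * π by ring,
    sin_antiperiodic.sub_nat_mul_eq, show 1 - (s + 1 / 2 - n) = n + 1 / 2 - s by ring]
  intro m hm
  have := congrArg re hm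
  simp at this
  have : (0 : ℝ) ≤ m := m.cast_nonneg
  linarith

end Complex

lemma tendsto_riemannZeta_mul_of_hasDerivAt {g : ℂ → ℂ} {g' : ℂ} (hg : HasDerivAt g g' 1)
    (hg1 : g 1 = 0) : Tendsto (fun s => riemannZeta s * g s) (𝓝[≠] 1) (𝓝 g') := by
  have hslope := hasDerivAt_iff_tendsto_slope.mp hg
  refine (one_mul g' ▸ riemannZeta_residue_one.mul hslope).congr' ?_
  filter_upwards [self_mem_nhdsWithin] with s hs
  rw [slope_def_field, hg1, sub_zero]
  field_simp [sub_ne_zero.mpr hs]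

lemma tendsto_riemannZeta_two_mul_mul_cos :
    Tendsto (fun s : ℂ => riemannZeta (2 * s) * cos (π * s)) (𝓝[≠] (1 / 2)) (𝓝 (-π / 2)) := by
  have hg : HasDerivAt (fun u : ℂ => cos (π * u / 2)) (-π / 2) 1 := by
    simpa [neg_div] using (((hasDerivAt_id' (1 : ℂ)).const_mul (π : ℂ)).div_const 2).ccos
  have hdouble : Tendsto (fun s : ℂ => 2 * s) (𝓝[≠] (1 / 2)) (𝓝[≠] 1) := by
    simpa using ((hasDerivAt_id (1 / 2 : ℂ)).const_mul 2).tendsto_nhdsNE (by norm_num)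
  convert (tendsto_riemannZeta_mul_of_hasDerivAt hg (by simp [cos_pi_div_two])).comp hdouble
    using 2 with s
  simp only [Function.comp_apply]
  ring_nf

lemma tendsto_riemannZeta_two_mul_mul_Gamma_ratio (n : ℕ) (hn : n ≠ 0) :
    Tendsto (fun s : ℂ => riemannZeta (2 * s) * ((-1) ^ n * (√π : ℂ) * (Gamma s * Gamma (s + 1 / 2)) /
        (Gamma (s + 1 / 2 + n) * Gamma (s + 1 / 2 - n))))
      (𝓝[≠] (1 / 2)) (𝓝 (-π / (2 * n))) := by
  have hnC : (n : ℂ) ≠ 0 := Nat.cast_ne_zero.mpr hn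
  have hπ : (π : ℂ) ≠ 0 := ofReal_ne_zero.mpr Real.pi_ne_zero
  set B : ℂ → ℂ := fun s => √π * Gamma s * Gamma (s + 1 / 2) * Gamma (n + 1 / 2 - s) /
    (π * Gamma (s + 1 / 2 + n))
  have hB_cont : ContinuousAt B (1 / 2) := by
    have hΓ₁ : ContinuousAt (fun s : ℂ => Gamma s) (1 / 2) :=
      continuousAt_Gamma_of_re_pos (by norm_num)
    have hΓ₂ : ContinuousAt (fun s : ℂ => Gamma (s + 1 / 2)) (1 / 2) :=
      (continuousAt_Gamma_of_re_pos (by norm_num)).comp (x := 1 / 2) (by fun_prop)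
    have hΓ₃ : ContinuousAt (fun s : ℂ => Gamma (n + 1 / 2 - s)) (1 / 2) :=
      (continuousAt_Gamma_of_re_pos (by
        simp only [one_div, add_sub_cancel_right, natCast_re, Nat.cast_pos]; omega)).comp (x := 1 / 2) (by fun_prop)
    have hΓ₄ : ContinuousAt (fun s : ℂ => Gamma (s + 1 / 2 + n)) (1 / 2) :=
      (continuousAt_Gamma_of_re_pos (by simp; positivity)).comp (x := 1 / 2) (by fun_prop)
    refine ((continuousAt_const.mul hΓ₁).mul hΓ₂ |>.mul hΓ₃).div (continuousAt_const.mul hΓ₄) ?_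
    exact mul_ne_zero hπ (Gamma_ne_zero_of_re_pos (by simp; positivity))
  have hB_val : B (1 / 2) = 1 / n := by
    have hΓn : Gamma (n : ℂ) ≠ 0 := Gamma_ne_zero_of_re_pos (by simpa using Nat.pos_of_ne_zero hn)
    have hsq : (√π : ℂ) * √π = π := by rw [← ofReal_mul, Real.mul_self_sqrt Real.pi_pos.le]
    simp only [B, show (1 / 2 : ℂ) + 1 / 2 = 1 by norm_num, show (n : ℂ) + 1 / 2 - 1 / 2 = n by ring,
      add_comm (1 : ℂ) n, Gamma_add_one _ hnC, Gamma_one_half_eq_ofReal_sqrt, Gamma_one, hsq]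
    field_simp
  have hlim := tendsto_riemannZeta_two_mul_mul_cos.mul
    ((hB_val ▸ hB_cont.tendsto).mono_left nhdsWithin_le_nhds)
  rw [show -(π : ℂ) / 2 * (1 / n) = -π / (2 * n) by field_simp] at hlim
  refine hlim.congr' ?_
  have hre : {s : ℂ | s.re < n + 1 / 2} ∈ 𝓝[≠] (1 / 2 : ℂ) :=
    nhdsWithin_le_nhds ((isOpen_lt continuous_re continuous_const).mem_nhds (by norm_num; omega))
  filter_upwards [hre] with s hs
  have hsign : (-1 : ℂ) ^ (n * 2) = 1 := (even_two.mul_left n).neg_one_pow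
  rw [div_mul_eq_div_div, div_eq_mul_inv _ (Gamma _), inv_Gamma_add_half_sub_nat n hs]
  simp only [B]
  ring_nf
  rw [hsign]
  ring

/-- For a nonzero even integer `k`, the renormalized archimedean intertwining operator at
`s = 1/2` satisfies `Ã_{1/2} f_{1/2}^{(k)} = -(π/|k|) f_{-1/2}^{(k)}`; equivalently,
`lim_{s→1/2} ζ(2s) (-1)^{k/2} √π Γ(s)Γ(s+1/2)/(Γ(s+(1+k)/2)Γ(s+(1-k)/2)) = -π/|k|`. -/
theorem stmt18 (k : ℤ) (hk : Even k) (hk0 : k ≠ 0) :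
    Tendsto (fun s : ℂ =>
        riemannZeta (2 * s) * ((-1 : ℂ) ^ (k / 2) * (Real.sqrt Real.pi : ℂ) *
          (Complex.Gamma s * Complex.Gamma (s + 1 / 2)) /
          (Complex.Gamma (s + (1 + (k : ℂ)) / 2) * Complex.Gamma (s + (1 - (k : ℂ)) / 2))))
      (nhdsWithin (1 / 2 : ℂ) {(1 / 2 : ℂ)}ᶜ)
      (nhds (-(Real.pi : ℂ) / ((|k| : ℤ) : ℂ))) := by
  obtain ⟨m, rfl⟩ := hk
  obtain ⟨n, rfl | rfl⟩ := Int.eq_nat_or_neg m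
  · have hn : n ≠ 0 := by omega
    have habs : ((|(n : ℤ) + n| : ℤ) : ℂ) = 2 * n := by
      rw [abs_of_nonneg (by omega)]; push_cast; ring
    rw [habs, show ((n : ℤ) + n) / 2 = n by omega, zpow_natCast]
    refine (tendsto_riemannZeta_two_mul_mul_Gamma_ratio n hn).congr fun s => ?_
    push_cast
    ring_nf
  · have hn : n ≠ 0 := by omega
    have habs : ((|-(n : ℤ) + -n| : ℤ) : ℂ) = 2 * n := by
      rw [abs_of_nonpos (by omega)]; push_cast; ring
    rw [habs, show (-(n : ℤ) + -n) / 2 = -n by omega, zpow_neg, zpow_natCast, ← inv_pow,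
      inv_neg_one]
    refine (tendsto_riemannZeta_two_mul_mul_Gamma_ratio n hn).congr fun s => ?_
    push_cast
    ring_nf
end
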